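/- Let L : ℝ[x] → ℝ be the linear functional defined on the basis of type B falling factorials by L((x)^B_k) = u^k for a fixed real u. Then for every polynomial p(x), L((x−1)·p(x−2)) = u·L(p(x)). -/
import Mathlib


open Polynomial in
/-- The type `B` falling factorial `(x)^B_k = (x-1)(x-3)⋯(x-2k+1)` as a real polynomial. -/
noncomputable def fallBPoly (k : ℕ) : Polynomial ℝ :=
  ∏ i ∈ Finset.range k, (X - C (2 * (i : ℝ) + 1))

open Polynomial

lemma fallB_monic (k : ℕ) : (fallBPoly k).Monic :=
  monic_prod_of_monic _ _ fun _ _ => monic_X_sub_C _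

lemma fallB_natDegree (k : ℕ) : (fallBPoly k).natDegree = k := by
  unfold fallBPoly
  rw [natDegree_prod _ _ (fun i _ => X_sub_C_ne_zero _)]
  simp only [natDegree_X_sub_C]
  simp

lemma fallB_succ (k : ℕ) :
    fallBPoly (k + 1) = fallBPoly k * (X - C (2 * (k : ℝ) + 1)) := by
  unfold fallBPoly
  rw [Finset.prod_range_succ]

lemma C_two_eq : (C (2:ℝ) : Polynomial ℝ) = 2 :=
  map_ofNat C 2

lemma fallB_key (k : ℕ) :
    (X - 1) * (fallBPoly k).comp (X - 2) = fallBPoly (k + 1) := by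
  induction k with
  | zero =>
    simp [fallBPoly]
  | succ k ih =>
    rw [fallB_succ k, mul_comp, ← mul_assoc, ih, fallB_succ (k + 1)]
    congr 1
    push_cast
    simp only [sub_comp, add_comp, mul_comp, one_comp, X_comp, C_comp, C_add, C_mul, C_1,
      map_ofNat, ofNat_comp]
    ring

open Polynomial in
theorem L_shift (u : ℝ) (L : Polynomial ℝ →ₗ[ℝ] ℝ)
    (hL : ∀ k : ℕ, L (fallBPoly k) = u ^ k) (p : Polynomial ℝ) :
    L ((X - 1) * p.comp (X - 2)) = u * L p := by
  suffices h : ∀ n : ℕ, ∀ p : Polynomial ℝ, p.natDegree < n →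
      L ((X - 1) * p.comp (X - 2)) = u * L p from
    h (p.natDegree + 1) p (Nat.lt_succ_self _)
  intro n
  induction n with
  | zero => intro p hp; omega
  | succ n ih =>
    intro p hp
    by_cases hp0 : p = 0
    · simp [hp0]
    · set d := p.natDegree with hd
      set q := p - C p.leadingCoeff * fallBPoly d with hq
      have hbase : L ((X - 1) * (fallBPoly d).comp (X - 2)) = u * L (fallBPoly d) := by
        rw [fallB_key, hL, hL, pow_succ, mul_comm]
      have hsplit : p = q + C p.leadingCoeff * fallBPoly d := by
        rw [hq]; ring
      have hlin : ∀ r : Polynomial ℝ,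
          L ((X - 1) * (C p.leadingCoeff * r)) = p.leadingCoeff * L ((X - 1) * r) := by
        intro r
        rw [show (X - 1 : Polynomial ℝ) * (C p.leadingCoeff * r)
              = p.leadingCoeff • ((X - 1) * r) by
            rw [smul_eq_C_mul]; ring, map_smul]
        rfl
      have hqdone : L ((X - 1) * q.comp (X - 2)) = u * L q := by
        by_cases hq0 : q = 0
        · simp [hq0]
        · apply ih
          have hdeg2 : p.degree = (C p.leadingCoeff * fallBPoly d).degree := by
            rw [degree_mul, degree_C (leadingCoeff_ne_zero.mpr hp0), zero_add,
              degree_eq_natDegree (fallB_monic d).ne_zero, fallB_natDegree,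
              degree_eq_natDegree hp0]
          have hlc : p.leadingCoeff = (C p.leadingCoeff * fallBPoly d).leadingCoeff := by
            rw [leadingCoeff_mul, leadingCoeff_C, (fallB_monic d).leadingCoeff, mul_one]
          have hdeg : q.degree < p.degree := by
            rw [hq]; exact degree_sub_lt hdeg2 hp0 hlc
          have : q.natDegree < p.natDegree := natDegree_lt_natDegree hq0 hdeg
          omega
      calc L ((X - 1) * p.comp (X - 2))
          = L ((X - 1) * q.comp (X - 2))
            + L ((X - 1) * (C p.leadingCoeff * (fallBPoly d).comp (X - 2))) := by
            conv_lhs => rw [hsplit]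
            rw [add_comp, mul_comp, C_comp, mul_add, map_add]
        _ = u * L q + p.leadingCoeff * (u * L (fallBPoly d)) := by
            rw [hqdone, hlin, hbase]
        _ = u * L p := by
            have hLp : L p = L q + p.leadingCoeff * L (fallBPoly d) := by
              conv_lhs => rw [hsplit]
              rw [map_add, ← smul_eq_C_mul, map_smul]
              rfl
            rw [hLp]; ring
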